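/- Let k be an algebraically closed field of characteristic zero and let N, M be natural numbers. Suppose G is an abelian group fitting into a short exact sequence 0 → (k,+) → G → ℤ^N → 0 and G' is an abelian group fitting into a short exact sequence 0 → k^× → G' → ℤ^M → 0. Then G and G' are not isomorphic as groups. (This is the key step in the proof of the main theorem, distinguishing the Picard groups of non-multiple non-reduced Kodaira curves from those of multiple Kodaira curves, and the Picard group of a nodal rational curve (type I_1) from that of a tacnode curve (type III).) -/
import Mathlib


/-- Let `k` be an algebraically closed field of characteristic zero. If `G` is an abelian
group fitting into a short exact sequence `0 → (k,+) → G → ℤ^N → 0` and `G'` is an abelian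
group fitting into a short exact sequence `0 → k^× → G' → ℤ^M → 0`, then `G` and `G'` are
not isomorphic as groups. -/
theorem additive_extension_not_iso_multiplicative_extension
    {k : Type*} [Field k] [IsAlgClosed k] [CharZero k] (N M : ℕ)
    {G G' : Type*} [AddCommGroup G] [AddCommGroup G']
    (i : k →+ G) (p : G →+ (Fin N → ℤ))
    (hi : Function.Injective i) (hp : Function.Surjective p)
    (hexact : p.ker = i.range)
    (i' : Additive kˣ →+ G') (p' : G' →+ (Fin M → ℤ))
    (hi' : Function.Injective i') (hp' : Function.Surjective p')
    (hexact' : p'.ker = i'.range) :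
    IsEmpty (G ≃+ G') := by
  constructor
  intro e
  -- the unit -1 gives a nonzero 2-torsion element of G'
  have hu : ((-1 : kˣ) : k) ≠ ((1 : kˣ) : k) := by norm_num
  have hune : (-1 : kˣ) ≠ 1 := fun h => hu (congrArg Units.val h)
  set g' : G' := i' (Additive.ofMul (-1 : kˣ)) with hg'
  have hg'ne : g' ≠ 0 := by
    intro h
    have : Additive.ofMul (-1 : kˣ) = (0 : Additive kˣ) := hi' (by simpa using h)
    exact hune (by simpa using this)
  have hsq : (2 : ℤ) • Additive.ofMul (-1 : kˣ) = 0 := by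
    apply Additive.toMul.injective
    rw [toMul_zsmul]
    exact neg_one_sq
  have hg'2 : (2 : ℤ) • g' = 0 := by
    rw [hg', ← map_zsmul, hsq, map_zero]
  -- pull back along the isomorphism
  set x : G := e.symm g' with hx
  have hx2 : (2 : ℤ) • x = 0 := by
    apply e.injective
    rw [map_zsmul, map_zero, hx, AddEquiv.apply_symm_apply]
    exact hg'2
  have hpx : p x = 0 := by
    funext j
    have h2 : (2 : ℤ) • p x = 0 := by rw [← map_zsmul, hx2, map_zero]
    have := congrFun h2 j
    simpa using this
  have hxmem : x ∈ i.range := by rw [← hexact]; exact hpx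
  obtain ⟨a, ha⟩ := hxmem
  have ha2 : (2 : ℤ) • a = 0 := by
    apply hi
    rw [map_zsmul, ha, hx2, map_zero]
  have ha0 : a = 0 := by
    have : (2 : ℤ) ≠ 0 := by norm_num
    simpa [this] using smul_eq_zero.mp ha2
  have : x = 0 := by rw [← ha, ha0, map_zero]
  exact hg'ne (by rw [← AddEquiv.apply_symm_apply e g', ← hx, this, map_zero])
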